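/- Suppose the underlying matrix M has a unique optimal injective assignment π₁, and let Δ_min = f(M, π₁) − max over injective π ≠ π₁ of f(M, π), with Δ_min > 0. Let M̂ satisfy |M[n,k] − M̂[n,k]| ≤ ε/(2N) for all n, k, and define Δ̂_min analogously for M̂ (difference between its best and second-best assignment values). Then |Δ_min − Δ̂_min| ≤ ε. -/

import Mathlib

open Finset

/-! The gap between the largest and second-largest value of a function on a set moves by at most
`2δ` when the function is perturbed by at most `δ` pointwise. Perturbing every entry of `M` by at
most `ε / (2N)` perturbs the value of every assignment by at most `ε / 2`. -/

structure IsTopTwoOn {α : Type*} (f : α → ℝ) (s : Set α) (a b : α) : Prop where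
  mem : a ∈ s
  isMaxOn : IsMaxOn f s a
  mem_diff : b ∈ s \ {a}
  isMaxOn_diff : IsMaxOn f (s \ {a}) b

namespace IsTopTwoOn

variable {α : Type*} {f g : α → ℝ} {s : Set α} {a b a' b' : α} {δ : ℝ}

theorem le_of_mem (h : IsTopTwoOn f s a b) {x : α} (hx : x ∈ s) : f x ≤ f a :=
  h.isMaxOn hx

theorem le_of_mem_of_ne (h : IsTopTwoOn f s a b) {x : α} (hx : x ∈ s) (hxa : x ≠ a) :
    f x ≤ f b :=
  h.isMaxOn_diff ⟨hx, hxa⟩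

/- If `g`'s runner-up `b'` is `f`'s maximizer `a`, then `g`'s maximizer `a'` is not, so `f a'`
bounds `f b` from below; otherwise `f b'` does. -/
theorem gap_sub_gap_le (hf : IsTopTwoOn f s a b) (hg : IsTopTwoOn g s a' b')
    (hfg : ∀ x ∈ s, |f x - g x| ≤ δ) :
    (f a - f b) - (g a' - g b') ≤ 2 * δ := by
  have close : ∀ x ∈ s, f x - δ ≤ g x ∧ g x ≤ f x + δ := fun x hx => by
    constructor <;> linarith [abs_le.mp (hfg x hx)]
  have hgb' : g b' ≤ g a' := hg.le_of_mem hg.mem_diff.1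
  by_cases hb' : b' = a
  · subst hb'
    have ha' : a' ≠ b' := fun h => hg.mem_diff.2 h.symm
    have hfa' : f a' ≤ f b := hf.le_of_mem_of_ne hg.mem ha'
    linarith [close a' hg.mem, close b' hf.mem]
  · have hfb' : f b' ≤ f b := hf.le_of_mem_of_ne hg.mem_diff.1 hb'
    have hga : g a ≤ g a' := hg.le_of_mem hf.mem
    linarith [close a hf.mem, close b' hg.mem_diff.1]

theorem abs_gap_sub_gap_le (hf : IsTopTwoOn f s a b) (hg : IsTopTwoOn g s a' b')
    (hfg : ∀ x ∈ s, |f x - g x| ≤ δ) :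
    |(f a - f b) - (g a' - g b')| ≤ 2 * δ := by
  have hgf : ∀ x ∈ s, |g x - f x| ≤ δ := fun x hx => abs_sub_comm (f x) (g x) ▸ hfg x hx
  rw [abs_sub_le_iff]
  exact ⟨hf.gap_sub_gap_le hg hfg, hg.gap_sub_gap_le hf hgf⟩

end IsTopTwoOn

theorem abs_sum_sub_sum_le {ι : Type*} [Fintype ι] {f g : ι → ℝ} {δ : ℝ}
    (h : ∀ i, |f i - g i| ≤ δ) :
    |∑ i, f i - ∑ i, g i| ≤ Fintype.card ι * δ := by
  rw [← Finset.sum_sub_distrib]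
  calc |∑ i, (f i - g i)| ≤ ∑ i, |f i - g i| := Finset.abs_sum_le_sum_abs _ _
    _ ≤ ∑ _i : ι, δ := Finset.sum_le_sum fun i _ => h i
    _ = Fintype.card ι * δ := by simp

theorem stmt_4_general (N K : ℕ) (hN : 0 < N)
    (ε : ℝ)
    (M M' : Fin N → Fin K → ℝ)
    (hclose : ∀ n k, |M n k - M' n k| ≤ ε / (2 * N))
    (π₁ π₂ πh₁ πh₂ : Fin N → Fin K)
    (hπ₁ : Function.Injective π₁) (hπ₂ : Function.Injective π₂)
    (hπh₁ : Function.Injective πh₁) (hπh₂ : Function.Injective πh₂)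
    -- π₁ is the unique maximizer of f(M, ·)
    (hopt : ∀ σ : Fin N → Fin K, Function.Injective σ →
      ∑ n, M n (σ n) ≤ ∑ n, M n (π₁ n))
    -- π₂ is a best assignment among those different from π₁
    (hπ₂ne : π₂ ≠ π₁)
    (hsec : ∀ σ : Fin N → Fin K, Function.Injective σ → σ ≠ π₁ →
      ∑ n, M n (σ n) ≤ ∑ n, M n (π₂ n))
    -- πh₁ maximizes f(M', ·) and πh₂ is a best assignment ≠ πh₁
    (hopth : ∀ σ : Fin N → Fin K, Function.Injective σ →
      ∑ n, M' n (σ n) ≤ ∑ n, M' n (πh₁ n))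
    (hπh₂ne : πh₂ ≠ πh₁)
    (hsech : ∀ σ : Fin N → Fin K, Function.Injective σ → σ ≠ πh₁ →
      ∑ n, M' n (σ n) ≤ ∑ n, M' n (πh₂ n))
    (Δmin Δhmin : ℝ)
    (hΔ : Δmin = (∑ n, M n (π₁ n)) - ∑ n, M n (π₂ n))
    (hΔh : Δhmin = (∑ n, M' n (πh₁ n)) - ∑ n, M' n (πh₂ n)) :
    |Δmin - Δhmin| ≤ ε := by
  have hTop : IsTopTwoOn (fun σ => ∑ n, M n (σ n)) {σ | Function.Injective σ} π₁ π₂ :=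
    ⟨hπ₁, hopt, ⟨hπ₂, hπ₂ne⟩, fun σ hσ => hsec σ hσ.1 hσ.2⟩
  have hTop' : IsTopTwoOn (fun σ => ∑ n, M' n (σ n)) {σ | Function.Injective σ} πh₁ πh₂ :=
    ⟨hπh₁, hopth, ⟨hπh₂, hπh₂ne⟩, fun σ hσ => hsech σ hσ.1 hσ.2⟩
  have hsum : ∀ σ : Fin N → Fin K, |∑ n, M n (σ n) - ∑ n, M' n (σ n)| ≤ ε / 2 := by
    intro σ
    have hN' : (N : ℝ) ≠ 0 := Nat.cast_ne_zero.mpr hN.ne'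
    calc _ ≤ Fintype.card (Fin N) * (ε / (2 * N)) := abs_sum_sub_sum_le fun n => hclose n (σ n)
      _ = ε / 2 := by rw [Fintype.card_fin]; field_simp
  rw [hΔ, hΔh]
  exact (hTop.abs_gap_sub_gap_le hTop' fun σ _ => hsum σ).trans_eq (by ring)

theorem stmt_4 (N K : ℕ) (hN : 0 < N) (hNK : N ≤ K) (hTwo : N < K ∨ 2 ≤ N)
    (ε : ℝ) (hε : 0 ≤ ε)
    (M M' : Fin N → Fin K → ℝ)
    (hclose : ∀ n k, |M n k - M' n k| ≤ ε / (2 * N))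
    (π₁ π₂ πh₁ πh₂ : Fin N → Fin K)
    (hπ₁ : Function.Injective π₁) (hπ₂ : Function.Injective π₂)
    (hπh₁ : Function.Injective πh₁) (hπh₂ : Function.Injective πh₂)
    -- π₁ is the unique maximizer of f(M, ·)
    (hopt : ∀ σ : Fin N → Fin K, Function.Injective σ →
      ∑ n, M n (σ n) ≤ ∑ n, M n (π₁ n))
    (huniq : ∀ σ : Fin N → Fin K, Function.Injective σ → σ ≠ π₁ →
      ∑ n, M n (σ n) < ∑ n, M n (π₁ n))
    -- π₂ is a best assignment among those different from π₁
    (hπ₂ne : π₂ ≠ π₁)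
    (hsec : ∀ σ : Fin N → Fin K, Function.Injective σ → σ ≠ π₁ →
      ∑ n, M n (σ n) ≤ ∑ n, M n (π₂ n))
    -- πh₁ maximizes f(M', ·) and πh₂ is a best assignment ≠ πh₁
    (hopth : ∀ σ : Fin N → Fin K, Function.Injective σ →
      ∑ n, M' n (σ n) ≤ ∑ n, M' n (πh₁ n))
    (hπh₂ne : πh₂ ≠ πh₁)
    (hsech : ∀ σ : Fin N → Fin K, Function.Injective σ → σ ≠ πh₁ →
      ∑ n, M' n (σ n) ≤ ∑ n, M' n (πh₂ n))
    (Δmin Δhmin : ℝ)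
    (hΔ : Δmin = (∑ n, M n (π₁ n)) - ∑ n, M n (π₂ n))
    (hΔpos : 0 < Δmin)
    (hΔh : Δhmin = (∑ n, M' n (πh₁ n)) - ∑ n, M' n (πh₂ n)) :
    |Δmin - Δhmin| ≤ ε :=
  stmt_4_general N K hN ε M M' hclose π₁ π₂ πh₁ πh₂ hπ₁ hπ₂ hπh₁ hπh₂ hopt hπ₂ne hsec hopth hπh₂ne
    hsech Δmin Δhmin hΔ hΔh
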